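/- arXiv:2504.04316 — 2 statements merged into one kernel-verified Lean document; each statement's English description precedes it below -/
import Mathlib

section
/- Consider the MISE bound R(h) = C₁h⁴ + C₂/(m²h⁶) + C₃/(nmh²) with positive constants C₁, C₂, C₃. If m^{1/5} = o(n), the minimizer satisfies h* ≍ m^{−1/5} and R(h*) ≍ m^{−4/5}; if n = o(m^{1/5}), then h* ≍ (nm)^{−1/6} and R(h*) ≍ (nm)^{−2/3}. -/
open Real Filter

lemma wamgm {a b θ : ℝ} (ha : 0 < a) (hb : 0 < b) (h0 : 0 ≤ θ) (h1 : θ ≤ 1) :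
    a ^ θ * b ^ (1 - θ) ≤ a + b := by
  have hmax : 0 < max a b := lt_max_of_lt_left ha
  calc a ^ θ * b ^ (1 - θ)
      ≤ (max a b) ^ θ * (max a b) ^ (1 - θ) :=
        mul_le_mul (Real.rpow_le_rpow ha.le (le_max_left _ _) h0)
          (Real.rpow_le_rpow hb.le (le_max_right _ _) (by linarith))
          (Real.rpow_nonneg hb.le _) (Real.rpow_nonneg hmax.le _)
    _ = max a b := by rw [← Real.rpow_add hmax]; norm_num
    _ ≤ a + b := max_le (by linarith) (by linarith)

lemma lower_core {A B H θ p q : ℝ} (hA : 0 < A) (hB : 0 < B) (hH : 0 < H)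
    (h0 : 0 ≤ θ) (h1 : θ ≤ 1) (hpq : p * θ + q * (1 - θ) = 0) :
    A ^ θ * B ^ (1 - θ) ≤ A * H ^ p + B * H ^ q := by
  have key : (A * H ^ p) ^ θ * (B * H ^ q) ^ (1 - θ) = A ^ θ * B ^ (1 - θ) := by
    rw [Real.mul_rpow hA.le (Real.rpow_nonneg hH.le p),
      Real.mul_rpow hB.le (Real.rpow_nonneg hH.le q),
      ← Real.rpow_mul hH.le, ← Real.rpow_mul hH.le,
      show A ^ θ * H ^ (p * θ) * (B ^ (1 - θ) * H ^ (q * (1 - θ)))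
        = A ^ θ * B ^ (1 - θ) * (H ^ (p * θ) * H ^ (q * (1 - θ))) from by ring,
      ← Real.rpow_add hH, hpq, Real.rpow_zero, mul_one]
  calc A ^ θ * B ^ (1 - θ) = (A * H ^ p) ^ θ * (B * H ^ q) ^ (1 - θ) := key.symm
    _ ≤ _ := wamgm (mul_pos hA (Real.rpow_pos_of_pos hH p))
        (mul_pos hB (Real.rpow_pos_of_pos hH q)) h0 h1

lemma rpow_le_of {H x K s : ℝ} (hH : 0 < H) (hx : 0 < x) (hK : 0 < K) (hs : 0 < s)
    (h : H ^ s ≤ K * x ^ s) : H ≤ K ^ s⁻¹ * x := by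
  have key : K * x ^ s = (K ^ s⁻¹ * x) ^ s := by
    rw [Real.mul_rpow (Real.rpow_nonneg hK.le _) hx.le, ← Real.rpow_mul hK.le,
      inv_mul_cancel₀ hs.ne', Real.rpow_one]
  by_contra h'
  push_neg at h'
  exact (not_le.mpr (Real.rpow_lt_rpow (by positivity) h' hs)) (key ▸ h)

lemma le_rpow_of {H x K s : ℝ} (hH : 0 < H) (hx : 0 < x) (hK : 0 < K) (hs : 0 < s)
    (h : K * x ^ s ≤ H ^ s) : K ^ s⁻¹ * x ≤ H := by
  have key : K * x ^ s = (K ^ s⁻¹ * x) ^ s := by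
    rw [Real.mul_rpow (Real.rpow_nonneg hK.le _) hx.le, ← Real.rpow_mul hK.le,
      inv_mul_cancel₀ hs.ne', Real.rpow_one]
  by_contra h'
  push_neg at h'
  exact (not_le.mpr (Real.rpow_lt_rpow hH.le h' hs)) (key ▸ h)


/-- For the MISE bound `R(h) = C₁h⁴ + C₂/(m²h⁶) + C₃/(nmh²)` with positive
constants, if `m^{1/5} = o(n)` the minimizer satisfies `h* ≍ m^{−1/5}` and `R(h*) ≍ m^{−4/5}`,
while if `n = o(m^{1/5})` then `h* ≍ (nm)^{−1/6}` and `R(h*) ≍ (nm)^{−2/3}`. -/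
theorem optimal_bandwidth_rates
    (C₁ C₂ C₃ : ℝ) (hC₁ : 0 < C₁) (hC₂ : 0 < C₂) (hC₃ : 0 < C₃)
    (n m : ℕ → ℝ)
    (hn1 : ∀ k, 1 ≤ n k) (hm1 : ∀ k, 1 ≤ m k)
    (hn : Tendsto n atTop atTop) (hm : Tendsto m atTop atTop)
    (R : ℕ → ℝ → ℝ)
    (hR : ∀ k h, 0 < h →
      R k h = C₁ * h ^ 4 + C₂ / (m k ^ 2 * h ^ 6) + C₃ / (n k * m k * h ^ 2))
    (hstar : ℕ → ℝ) (hpos : ∀ k, 0 < hstar k)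
    (hmin : ∀ k, ∀ h : ℝ, 0 < h → R k (hstar k) ≤ R k h) :
    -- Case m^{1/5} = o(n): h* ≍ m^{-1/5} and R(h*) ≍ m^{-4/5}
    ((Tendsto (fun k => m k ^ ((1:ℝ)/5) / n k) atTop (nhds 0)) →
      ∃ c C : ℝ, 0 < c ∧ 0 < C ∧ ∀ᶠ k in atTop,
        c * m k ^ (-(1:ℝ)/5) ≤ hstar k ∧ hstar k ≤ C * m k ^ (-(1:ℝ)/5) ∧
        c * m k ^ (-(4:ℝ)/5) ≤ R k (hstar k) ∧ R k (hstar k) ≤ C * m k ^ (-(4:ℝ)/5)) ∧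
    -- Case n = o(m^{1/5}): h* ≍ (nm)^{-1/6} and R(h*) ≍ (nm)^{-2/3}
    ((Tendsto (fun k => n k / m k ^ ((1:ℝ)/5)) atTop (nhds 0)) →
      ∃ c C : ℝ, 0 < c ∧ 0 < C ∧ ∀ᶠ k in atTop,
        c * (n k * m k) ^ (-(1:ℝ)/6) ≤ hstar k ∧
        hstar k ≤ C * (n k * m k) ^ (-(1:ℝ)/6) ∧
        c * (n k * m k) ^ (-(2:ℝ)/3) ≤ R k (hstar k) ∧
        R k (hstar k) ≤ C * (n k * m k) ^ (-(2:ℝ)/3)) := by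
  have hCt : 0 < C₁ + C₂ + C₃ := by linarith
  constructor
  · -- Case 1
    intro hlim
    refine ⟨min (C₁ ^ ((3:ℝ)/5) * C₂ ^ ((2:ℝ)/5)) ((C₂/(C₁+C₂+C₃)) ^ ((6:ℝ)⁻¹)),
      max (C₁+C₂+C₃) (((C₁+C₂+C₃)/C₁) ^ ((4:ℝ)⁻¹)), by positivity,
      lt_max_of_lt_left hCt, ?_⟩
    filter_upwards [hlim.eventually_lt_const one_pos] with k hk
    have hM : (1:ℝ) ≤ m k := hm1 k
    have hM0 : (0:ℝ) < m k := by linarith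
    have hN : (1:ℝ) ≤ n k := hn1 k
    have hN0 : (0:ℝ) < n k := by linarith
    have hH : 0 < hstar k := hpos k
    have hkk : m k ^ ((1:ℝ)/5) ≤ n k := ((div_lt_one hN0).mp hk).le
    set M := m k with hMdef
    set N := n k with hNdef
    set H := hstar k with hHdef
    set Ct := C₁ + C₂ + C₃ with hCtdef
    have h₀pos : 0 < M ^ (-(1:ℝ)/5) := Real.rpow_pos_of_pos hM0 _
    have e4 : (M ^ (-(1:ℝ)/5)) ^ (4:ℕ) = M ^ (-(4:ℝ)/5) := by
      rw [← Real.rpow_natCast (M ^ (-(1:ℝ)/5)) 4, ← Real.rpow_mul hM0.le]; norm_num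
    have e6 : (M ^ (-(1:ℝ)/5)) ^ (6:ℕ) = M ^ (-(6:ℝ)/5) := by
      rw [← Real.rpow_natCast (M ^ (-(1:ℝ)/5)) 6, ← Real.rpow_mul hM0.le]; norm_num
    have e2 : (M ^ (-(1:ℝ)/5)) ^ (2:ℕ) = M ^ (-(2:ℝ)/5) := by
      rw [← Real.rpow_natCast (M ^ (-(1:ℝ)/5)) 2, ← Real.rpow_mul hM0.le]; norm_num
    have em : M ^ (2:ℕ) * M ^ (-(6:ℝ)/5) = M ^ ((4:ℝ)/5) := by
      rw [← Real.rpow_natCast M 2, ← Real.rpow_add hM0]; norm_num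
    have einv : M ^ (-(4:ℝ)/5) = (M ^ ((4:ℝ)/5))⁻¹ := by
      rw [← Real.rpow_neg hM0.le]; norm_num
    have hrate : 0 < M ^ (-(4:ℝ)/5) := Real.rpow_pos_of_pos hM0 _
    have hrpos : 0 < M ^ ((4:ℝ)/5) := Real.rpow_pos_of_pos hM0 _
    -- upper bound on R(h*)
    have RU : R k H ≤ Ct * M ^ (-(4:ℝ)/5) := by
      have h1 := hmin k (M ^ (-(1:ℝ)/5)) h₀pos
      rw [hR k _ h₀pos, e4, e6, e2] at h1
      refine h1.trans ?_
      have h3 : C₃ / (N * M * M ^ (-(2:ℝ)/5)) ≤ C₃ * M ^ (-(4:ℝ)/5) := by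
        have em2 : M * M ^ (-(2:ℝ)/5) = M ^ ((3:ℝ)/5) := by
          nth_rw 1 [← Real.rpow_one M]; rw [← Real.rpow_add hM0]; norm_num
        have em3 : M ^ ((1:ℝ)/5) * M ^ ((3:ℝ)/5) = M ^ ((4:ℝ)/5) := by
          rw [← Real.rpow_add hM0]; norm_num
        have hb : M ^ ((4:ℝ)/5) ≤ N * M * M ^ (-(2:ℝ)/5) := by
          rw [mul_assoc, em2, ← em3]
          exact mul_le_mul_of_nonneg_right hkk (Real.rpow_nonneg hM0.le _)
        rw [einv, ← div_eq_mul_inv]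
        exact div_le_div_of_nonneg_left hC₃.le hrpos hb
      have h2 : C₂ / (M ^ (2:ℕ) * M ^ (-(6:ℝ)/5)) = C₂ * M ^ (-(4:ℝ)/5) := by
        rw [em, einv, div_eq_mul_inv]
      rw [h2]
      rw [hCtdef]
      linarith
    -- lower bound on R(h*)
    have RL : C₁ ^ ((3:ℝ)/5) * C₂ ^ ((2:ℝ)/5) * M ^ (-(4:ℝ)/5) ≤ R k H := by
      have hB : (0:ℝ) < C₂ / M ^ (2:ℕ) := by positivity
      have h1 := lower_core (A := C₁) (B := C₂ / M ^ (2:ℕ)) (H := H)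
        (θ := (3:ℝ)/5) (p := (4:ℝ)) (q := (-6:ℝ)) hC₁ hB hH
        (by norm_num) (by norm_num) (by norm_num)
      have eHp : H ^ ((4:ℝ)) = H ^ (4:ℕ) := by
        rw [← Real.rpow_natCast H 4]; norm_num
      have eHq : (C₂ / M ^ (2:ℕ)) * H ^ ((-6:ℝ)) = C₂ / (M ^ (2:ℕ) * H ^ (6:ℕ)) := by
        rw [show ((-6:ℝ)) = -((6:ℕ):ℝ) by norm_num, Real.rpow_neg hH.le,
          Real.rpow_natCast]
        field_simp
      have eB : (C₂ / M ^ (2:ℕ)) ^ (1 - (3:ℝ)/5) = C₂ ^ ((2:ℝ)/5) * M ^ (-(4:ℝ)/5) := by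
        rw [show (1 - (3:ℝ)/5) = (2:ℝ)/5 by norm_num,
          Real.div_rpow hC₂.le (by positivity), ← Real.rpow_natCast M 2,
          ← Real.rpow_mul hM0.le, div_eq_mul_inv, ← Real.rpow_neg hM0.le]
        norm_num
      rw [eHp, eHq, eB] at h1
      have h1' : C₁ ^ ((3:ℝ)/5) * C₂ ^ ((2:ℝ)/5) * M ^ (-(4:ℝ)/5)
          ≤ C₁ * H ^ (4:ℕ) + C₂ / (M ^ (2:ℕ) * H ^ (6:ℕ)) := by
        calc C₁ ^ ((3:ℝ)/5) * C₂ ^ ((2:ℝ)/5) * M ^ (-(4:ℝ)/5)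
            = C₁ ^ ((3:ℝ)/5) * (C₂ ^ ((2:ℝ)/5) * M ^ (-(4:ℝ)/5)) := by ring
          _ ≤ _ := h1
      rw [hR k H hH]
      have hpos3 : 0 < C₃ / (N * M * H ^ (2:ℕ)) := by positivity
      linarith
    -- bounds on h*
    have hterm1 : C₁ * H ^ (4:ℕ) ≤ Ct * M ^ (-(4:ℝ)/5) := by
      have := hR k H hH
      have hpos2 : 0 < C₂ / (M ^ (2:ℕ) * H ^ (6:ℕ)) := by positivity
      have hpos3 : 0 < C₃ / (N * M * H ^ (2:ℕ)) := by positivity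
      rw [this] at RU; linarith
    have hterm2 : C₂ / (M ^ (2:ℕ) * H ^ (6:ℕ)) ≤ Ct * M ^ (-(4:ℝ)/5) := by
      have := hR k H hH
      have hpos1 : 0 < C₁ * H ^ (4:ℕ) := by positivity
      have hpos3 : 0 < C₃ / (N * M * H ^ (2:ℕ)) := by positivity
      rw [this] at RU; linarith
    have HU : H ≤ (Ct/C₁) ^ ((4:ℝ)⁻¹) * M ^ (-(1:ℝ)/5) := by
      apply rpow_le_of hH h₀pos (by positivity) (by norm_num : (0:ℝ) < 4)
      have eX : (M ^ (-(1:ℝ)/5)) ^ ((4:ℝ)) = M ^ (-(4:ℝ)/5) := by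
        rw [← Real.rpow_mul hM0.le]; norm_num
      have eH : H ^ ((4:ℝ)) = H ^ (4:ℕ) := by rw [← Real.rpow_natCast H 4]; norm_num
      rw [eX, eH, div_mul_eq_mul_div, le_div_iff₀ hC₁]
      calc H ^ (4:ℕ) * C₁ = C₁ * H ^ (4:ℕ) := by ring
        _ ≤ Ct * M ^ (-(4:ℝ)/5) := hterm1
    have HL : (C₂/Ct) ^ ((6:ℝ)⁻¹) * M ^ (-(1:ℝ)/5) ≤ H := by
      apply le_rpow_of hH h₀pos (by positivity) (by norm_num : (0:ℝ) < 6)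
      have eX : (M ^ (-(1:ℝ)/5)) ^ ((6:ℝ)) = M ^ (-(6:ℝ)/5) := by
        rw [← Real.rpow_mul hM0.le]; norm_num
      have eH : H ^ ((6:ℝ)) = H ^ (6:ℕ) := by rw [← Real.rpow_natCast H 6]; norm_num
      rw [eX, eH]
      have hd : C₂ ≤ Ct * M ^ (-(4:ℝ)/5) * (M ^ (2:ℕ) * H ^ (6:ℕ)) :=
        (div_le_iff₀ (by positivity)).mp hterm2
      have e0 : M ^ (-(4:ℝ)/5) * M ^ (2:ℕ) * M ^ (-(6:ℝ)/5) = 1 := by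
        rw [← Real.rpow_natCast M 2, ← Real.rpow_add hM0, ← Real.rpow_add hM0]
        norm_num
      have h2 : C₂ * M ^ (-(6:ℝ)/5)
          ≤ (Ct * M ^ (-(4:ℝ)/5) * (M ^ (2:ℕ) * H ^ (6:ℕ))) * M ^ (-(6:ℝ)/5) :=
        mul_le_mul_of_nonneg_right hd (Real.rpow_nonneg hM0.le _)
      have h3 : (Ct * M ^ (-(4:ℝ)/5) * (M ^ (2:ℕ) * H ^ (6:ℕ))) * M ^ (-(6:ℝ)/5)
          = H ^ (6:ℕ) * Ct := by linear_combination Ct * H ^ (6:ℕ) * e0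
      rw [div_mul_eq_mul_div, div_le_iff₀ hCt]
      linarith
    refine ⟨?_, ?_, ?_, ?_⟩
    · exact le_trans (mul_le_mul_of_nonneg_right (min_le_right _ _) h₀pos.le) HL
    · exact HU.trans (mul_le_mul_of_nonneg_right (le_max_right _ _) h₀pos.le)
    · exact le_trans (mul_le_mul_of_nonneg_right (min_le_left _ _) hrate.le) RL
    · exact RU.trans (mul_le_mul_of_nonneg_right (le_max_left _ _) hrate.le)
  · -- Case 2
    intro hlim
    refine ⟨min (C₁ ^ ((1:ℝ)/3) * C₃ ^ ((2:ℝ)/3)) ((C₃/(C₁+C₂+C₃)) ^ ((2:ℝ)⁻¹)),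
      max (C₁+C₂+C₃) (((C₁+C₂+C₃)/C₁) ^ ((4:ℝ)⁻¹)), by positivity,
      lt_max_of_lt_left hCt, ?_⟩
    filter_upwards [hlim.eventually_lt_const one_pos] with k hk
    have hM : (1:ℝ) ≤ m k := hm1 k
    have hM0 : (0:ℝ) < m k := by linarith
    have hN : (1:ℝ) ≤ n k := hn1 k
    have hN0 : (0:ℝ) < n k := by linarith
    have hH : 0 < hstar k := hpos k
    have hk' : n k ≤ m k ^ ((1:ℝ)/5) :=
      ((div_lt_one (Real.rpow_pos_of_pos hM0 _)).mp hk).le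
    set M := m k with hMdef
    set N := n k with hNdef
    set H := hstar k with hHdef
    set Ct := C₁ + C₂ + C₃ with hCtdef
    set P := N * M with hPdef
    have hP0 : (0:ℝ) < P := mul_pos hN0 hM0
    have h₀pos : 0 < P ^ (-(1:ℝ)/6) := Real.rpow_pos_of_pos hP0 _
    have e4 : (P ^ (-(1:ℝ)/6)) ^ (4:ℕ) = P ^ (-(2:ℝ)/3) := by
      rw [← Real.rpow_natCast (P ^ (-(1:ℝ)/6)) 4, ← Real.rpow_mul hP0.le]; norm_num
    have e6 : (P ^ (-(1:ℝ)/6)) ^ (6:ℕ) = P⁻¹ := by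
      rw [← Real.rpow_natCast (P ^ (-(1:ℝ)/6)) 6, ← Real.rpow_mul hP0.le]
      norm_num [Real.rpow_neg_one]
    have e2 : (P ^ (-(1:ℝ)/6)) ^ (2:ℕ) = P ^ (-(1:ℝ)/3) := by
      rw [← Real.rpow_natCast (P ^ (-(1:ℝ)/6)) 2, ← Real.rpow_mul hP0.le]; norm_num
    have hrate : 0 < P ^ (-(2:ℝ)/3) := Real.rpow_pos_of_pos hP0 _
    -- key comparison N/M ≤ P^{-2/3}
    have key2 : N / M ≤ P ^ (-(2:ℝ)/3) := by
      have hN53 : N ^ ((5:ℝ)/3) ≤ M ^ ((1:ℝ)/3) := by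
        calc N ^ ((5:ℝ)/3) ≤ (M ^ ((1:ℝ)/5)) ^ ((5:ℝ)/3) :=
              Real.rpow_le_rpow hN0.le hk' (by norm_num)
          _ = M ^ ((1:ℝ)/3) := by rw [← Real.rpow_mul hM0.le]; norm_num
      have em : M ^ (-(2:ℝ)/3) * M = M ^ ((1:ℝ)/3) := by
        nth_rw 2 [← Real.rpow_one M]
        rw [← Real.rpow_add hM0]; norm_num
      have e1 : P ^ (-(2:ℝ)/3) * M = M ^ ((1:ℝ)/3) * N ^ (-(2:ℝ)/3) := by
        rw [hPdef, Real.mul_rpow hN0.le hM0.le]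
        linear_combination N ^ (-(2:ℝ)/3) * em
      have e2' : N ^ ((5:ℝ)/3) * N ^ (-(2:ℝ)/3) = N := by
        rw [← Real.rpow_add hN0]; norm_num
      rw [div_le_iff₀ hM0, e1]
      calc N = N ^ ((5:ℝ)/3) * N ^ (-(2:ℝ)/3) := e2'.symm
        _ ≤ M ^ ((1:ℝ)/3) * N ^ (-(2:ℝ)/3) :=
            mul_le_mul_of_nonneg_right hN53 (Real.rpow_nonneg hN0.le _)
    -- upper bound on R(h*)
    have RU : R k H ≤ Ct * P ^ (-(2:ℝ)/3) := by
      have h1 := hmin k (P ^ (-(1:ℝ)/6)) h₀pos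
      rw [hR k _ h₀pos, e4, e6, e2] at h1
      refine h1.trans ?_
      have t2eq : C₂ / (M ^ (2:ℕ) * P⁻¹) = C₂ * (N / M) := by
        rw [hPdef]
        field_simp
      have t3eq : C₃ / (P * P ^ (-(1:ℝ)/3)) = C₃ * P ^ (-(2:ℝ)/3) := by
        have ep : P * P ^ (-(1:ℝ)/3) = P ^ ((2:ℝ)/3) := by
          nth_rw 1 [← Real.rpow_one P]
          rw [← Real.rpow_add hP0]; norm_num
        have einv : P ^ (-(2:ℝ)/3) = (P ^ ((2:ℝ)/3))⁻¹ := by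
          rw [← Real.rpow_neg hP0.le]; norm_num
        rw [ep, einv, div_eq_mul_inv]
      have t2le : C₂ * (N / M) ≤ C₂ * P ^ (-(2:ℝ)/3) :=
        mul_le_mul_of_nonneg_left key2 hC₂.le
      rw [t2eq, t3eq, hCtdef]
      linarith
    -- lower bound on R(h*)
    have RL : C₁ ^ ((1:ℝ)/3) * C₃ ^ ((2:ℝ)/3) * P ^ (-(2:ℝ)/3) ≤ R k H := by
      have hB : (0:ℝ) < C₃ / P := by positivity
      have h1 := lower_core (A := C₁) (B := C₃ / P) (H := H)
        (θ := (1:ℝ)/3) (p := (4:ℝ)) (q := (-2:ℝ)) hC₁ hB hH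
        (by norm_num) (by norm_num) (by norm_num)
      have eHp : H ^ ((4:ℝ)) = H ^ (4:ℕ) := by
        rw [← Real.rpow_natCast H 4]; norm_num
      have eHq : (C₃ / P) * H ^ ((-2:ℝ)) = C₃ / (P * H ^ (2:ℕ)) := by
        rw [show ((-2:ℝ)) = -((2:ℕ):ℝ) by norm_num, Real.rpow_neg hH.le,
          Real.rpow_natCast]
        field_simp
      have eB : (C₃ / P) ^ (1 - (1:ℝ)/3) = C₃ ^ ((2:ℝ)/3) * P ^ (-(2:ℝ)/3) := by
        rw [show (1 - (1:ℝ)/3) = (2:ℝ)/3 by norm_num,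
          Real.div_rpow hC₃.le hP0.le, div_eq_mul_inv, ← Real.rpow_neg hP0.le]
        norm_num
      rw [eHp, eHq, eB] at h1
      have h1' : C₁ ^ ((1:ℝ)/3) * C₃ ^ ((2:ℝ)/3) * P ^ (-(2:ℝ)/3)
          ≤ C₁ * H ^ (4:ℕ) + C₃ / (P * H ^ (2:ℕ)) := by
        calc C₁ ^ ((1:ℝ)/3) * C₃ ^ ((2:ℝ)/3) * P ^ (-(2:ℝ)/3)
            = C₁ ^ ((1:ℝ)/3) * (C₃ ^ ((2:ℝ)/3) * P ^ (-(2:ℝ)/3)) := by ring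
          _ ≤ _ := h1
      rw [hR k H hH]
      have hpos2 : 0 < C₂ / (M ^ (2:ℕ) * H ^ (6:ℕ)) := by positivity
      linarith
    -- bounds on h*
    have hterm1 : C₁ * H ^ (4:ℕ) ≤ Ct * P ^ (-(2:ℝ)/3) := by
      have := hR k H hH
      have hpos2 : 0 < C₂ / (M ^ (2:ℕ) * H ^ (6:ℕ)) := by positivity
      have hpos3 : 0 < C₃ / (P * H ^ (2:ℕ)) := by positivity
      rw [this] at RU; linarith
    have hterm3 : C₃ / (P * H ^ (2:ℕ)) ≤ Ct * P ^ (-(2:ℝ)/3) := by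
      have := hR k H hH
      have hpos1 : 0 < C₁ * H ^ (4:ℕ) := by positivity
      have hpos2 : 0 < C₂ / (M ^ (2:ℕ) * H ^ (6:ℕ)) := by positivity
      rw [this] at RU; linarith
    have HU : H ≤ (Ct/C₁) ^ ((4:ℝ)⁻¹) * P ^ (-(1:ℝ)/6) := by
      apply rpow_le_of hH h₀pos (by positivity) (by norm_num : (0:ℝ) < 4)
      have eX : (P ^ (-(1:ℝ)/6)) ^ ((4:ℝ)) = P ^ (-(2:ℝ)/3) := by
        rw [← Real.rpow_mul hP0.le]; norm_num
      have eH : H ^ ((4:ℝ)) = H ^ (4:ℕ) := by rw [← Real.rpow_natCast H 4]; norm_num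
      rw [eX, eH, div_mul_eq_mul_div, le_div_iff₀ hC₁]
      calc H ^ (4:ℕ) * C₁ = C₁ * H ^ (4:ℕ) := by ring
        _ ≤ Ct * P ^ (-(2:ℝ)/3) := hterm1
    have HL : (C₃/Ct) ^ ((2:ℝ)⁻¹) * P ^ (-(1:ℝ)/6) ≤ H := by
      apply le_rpow_of hH h₀pos (by positivity) (by norm_num : (0:ℝ) < 2)
      have eX : (P ^ (-(1:ℝ)/6)) ^ ((2:ℝ)) = P ^ (-(1:ℝ)/3) := by
        rw [← Real.rpow_mul hP0.le]; norm_num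
      have eH : H ^ ((2:ℝ)) = H ^ (2:ℕ) := by rw [← Real.rpow_natCast H 2]; norm_num
      rw [eX, eH]
      have hd : C₃ ≤ Ct * P ^ (-(2:ℝ)/3) * (P * H ^ (2:ℕ)) :=
        (div_le_iff₀ (by positivity)).mp hterm3
      have e0 : P ^ (-(2:ℝ)/3) * P * P ^ (-(1:ℝ)/3) = 1 := by
        nth_rw 2 [← Real.rpow_one P]
        rw [← Real.rpow_add hP0, ← Real.rpow_add hP0]
        norm_num
      have h2 : C₃ * P ^ (-(1:ℝ)/3)
          ≤ (Ct * P ^ (-(2:ℝ)/3) * (P * H ^ (2:ℕ))) * P ^ (-(1:ℝ)/3) :=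
        mul_le_mul_of_nonneg_right hd (Real.rpow_nonneg hP0.le _)
      have h3 : (Ct * P ^ (-(2:ℝ)/3) * (P * H ^ (2:ℕ))) * P ^ (-(1:ℝ)/3)
          = H ^ (2:ℕ) * Ct := by linear_combination Ct * H ^ (2:ℕ) * e0
      rw [div_mul_eq_mul_div, div_le_iff₀ hCt]
      linarith
    refine ⟨?_, ?_, ?_, ?_⟩
    · exact le_trans (mul_le_mul_of_nonneg_right (min_le_right _ _) h₀pos.le) HL
    · exact HU.trans (mul_le_mul_of_nonneg_right (le_max_right _ _) h₀pos.le)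
    · exact le_trans (mul_le_mul_of_nonneg_right (min_le_left _ _) hrate.le) RL
    · exact RU.trans (mul_le_mul_of_nonneg_right (le_max_left _ _) hrate.le)
end

section
/- Let f_ε : ℝ² → ℝ be a bounded probability density with sup f_ε ≤ M, K a kernel with ∫K = 1, ∫zK(z)dz = 0, and bounded Hessian assumptions on f_ε (‖∇∇f_ε‖ ≤ M uniformly). Let s : [0,1] → ℝ² be a trajectory, and for timestamps t₁,…,t_m define the weights β_j(t) = K_T(d_T(t_j,t)/h_T)/Σ_{j'} K_T(d_T(t_{j'},t)/h_T). Then the expectation of the conditional KDE given trajectory s satisfies |E[ Σ_j β_j(t) h_X^{-2} K((s(t_j)+ε_j − x)/h_X) ] − f_ε(x − s(t))| ≤ C·h_X² + Σ_j β_j(t)·|f_ε(x − s(t_j)) − f_ε(x − s(t))| for a constant C depending only on K and M. -/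
/-!
Substituting `η = y + h z` with `y = x - s(t_j)` turns the `j`-th expectation into
`∫ K(z) f_ε(y + h z) dz`. Since `K` has unit mass and vanishing first moment, the constant and
linear terms of the second-order Taylor expansion of `f_ε` at `y` integrate to `f_ε(y)`, and the
remainder, at most `M h² ‖z‖²`, contributes at most `M h² ∫ K(z) ‖z‖² dz`. The triangle
inequality through `f_ε(x - s(t_j))` and averaging with the convex weights `β_j(t)` give the bound
with `C = M ∫ K(z) ‖z‖² dz`.
-/

open MeasureTheory Real

/-- The cyclic distance on `[0,1]`. -/
noncomputable def dT (t₁ t₂ : ℝ) : ℝ := min |t₁ - t₂| (1 - |t₁ - t₂|)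

open Module Metric

section Taylor

variable {E F : Type*} [NormedAddCommGroup E] [NormedSpace ℝ E]
  [NormedAddCommGroup F] [NormedSpace ℝ F]

theorem norm_fderiv_sub_fderiv_le_of_norm_iteratedFDeriv_two_le {f : E → F} {M : ℝ}
    (hf : ContDiff ℝ 2 f) (hM : ∀ y, ‖iteratedFDeriv ℝ 2 f y‖ ≤ M) (y p : E) :
    ‖fderiv ℝ f p - fderiv ℝ f y‖ ≤ M * ‖p - y‖ := by
  have hDf : Differentiable ℝ (fderiv ℝ f) :=
    (hf.fderiv_right (m := 1) le_rfl).differentiable one_ne_zero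
  refine convex_univ.norm_image_sub_le_of_norm_fderiv_le (fun q _ => hDf q) (fun q _ => ?_)
    (Set.mem_univ y) (Set.mem_univ p)
  rw [← norm_iteratedFDeriv_zero (𝕜 := ℝ) (f := fderiv ℝ (fderiv ℝ f)) (x := q),
    norm_iteratedFDeriv_fderiv, norm_iteratedFDeriv_fderiv]
  exact hM q

theorem norm_sub_sub_fderiv_le_of_norm_iteratedFDeriv_two_le {f : E → F} {M : ℝ}
    (hf : ContDiff ℝ 2 f) (hM : ∀ y, ‖iteratedFDeriv ℝ 2 f y‖ ≤ M) (y v : E) :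
    ‖f (y + v) - f y - fderiv ℝ f y v‖ ≤ M * ‖v‖ ^ 2 := by
  have hbound : ∀ p ∈ closedBall y ‖v‖, ‖fderiv ℝ f p - fderiv ℝ f y‖ ≤ M * ‖v‖ := by
    intro p hp
    have hM0 : 0 ≤ M := (norm_nonneg _).trans (hM y)
    exact (norm_fderiv_sub_fderiv_le_of_norm_iteratedFDeriv_two_le hf hM y p).trans
      (mul_le_mul_of_nonneg_left (mem_closedBall_iff_norm.1 hp) hM0)
  have := (convex_closedBall y ‖v‖).norm_image_sub_le_of_norm_fderiv_le'
    (fun p _ => (hf.differentiable two_ne_zero).differentiableAt) hbound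
    (mem_closedBall_self (norm_nonneg v)) (show y + v ∈ closedBall y ‖v‖ by simp)
  simpa [sq, mul_assoc] using this

end Taylor

section Kernel

variable {E : Type*} [NormedAddCommGroup E] [NormedSpace ℝ E] [MeasurableSpace E]
  [BorelSpace E]

theorem integral_inv_pow_mul_kernel_mul_eq [FiniteDimensional ℝ E] (μ : Measure E)
    [μ.IsAddHaarMeasure] (K f : E → ℝ) (y : E) {h : ℝ} (hh : 0 < h) :
    ∫ η, (h ^ finrank ℝ E)⁻¹ * K (h⁻¹ • (η - y)) * f η ∂μ = ∫ z, K z * f (y + h • z) ∂μ := by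
  have htranslate : ∫ η, K (h⁻¹ • (η - y)) * f η ∂μ = ∫ u, K (h⁻¹ • u) * f (y + u) ∂μ := by
    rw [← integral_add_left_eq_self (fun η => K (h⁻¹ • (η - y)) * f η) y]
    simp only [add_sub_cancel_left]
  have hscale := Measure.integral_comp_inv_smul_of_nonneg μ (fun z => K z * f (y + h • z)) hh.le
  simp only [smul_inv_smul₀ hh.ne', smul_eq_mul] at hscale
  simp_rw [mul_assoc, integral_const_mul, htranslate, hscale, ← mul_assoc,
    inv_mul_cancel₀ (pow_pos hh _).ne', one_mul]

variable [SecondCountableTopology E] {μ : Measure E} {K : E → ℝ}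

theorem integrable_smul_self_of_integrable_mul_norm_sq (hK : Integrable K μ)
    (hK0 : ∀ z, 0 ≤ K z) (hK2 : Integrable (fun z => K z * ‖z‖ ^ 2) μ) :
    Integrable (fun z => K z • z) μ := by
  refine (hK.add hK2).mono' (hK.aestronglyMeasurable.smul aestronglyMeasurable_id)
    (ae_of_all _ fun z => ?_)
  rw [norm_smul, norm_of_nonneg (hK0 z), Pi.add_apply]
  nlinarith [hK0 z, norm_nonneg z, sq_nonneg (‖z‖ - 1)]

theorem abs_integral_kernel_mul_sub_le [CompleteSpace E] {f : E → ℝ} {M : ℝ}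
    (hf : ContDiff ℝ 2 f) (hM : ∀ y, ‖iteratedFDeriv ℝ 2 f y‖ ≤ M)
    (hK0 : ∀ z, 0 ≤ K z) (hK1 : ∫ z, K z ∂μ = 1) (hKmean : ∫ z, K z • z ∂μ = 0)
    (hK2 : Integrable (fun z => K z * ‖z‖ ^ 2) μ) (y : E) (h : ℝ) :
    |∫ z, K z * f (y + h • z) ∂μ - f y| ≤ (M * ∫ z, K z * ‖z‖ ^ 2 ∂μ) * h ^ 2 := by
  have hK : Integrable K μ := .of_integral_ne_zero (by rw [hK1]; exact one_ne_zero)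
  set L : E →L[ℝ] ℝ := h • fderiv ℝ f y
  set R : E → ℝ := fun z => f (y + h • z) - f y - fderiv ℝ f y (h • z)
  have hR : ∀ z, |R z| ≤ M * h ^ 2 * ‖z‖ ^ 2 := fun z => by
    simpa [R, norm_smul, mul_pow, mul_assoc] using
      norm_sub_sub_fderiv_le_of_norm_iteratedFDeriv_two_le hf hM y (h • z)
  have hKR : Integrable (fun z => K z * R z) μ := by
    have hRcont : Continuous R := by
      have := hf.continuous
      fun_prop
    refine (hK2.const_mul (M * h ^ 2)).mono'
      (hK.aestronglyMeasurable.mul hRcont.aestronglyMeasurable) (ae_of_all _ fun z => ?_)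
    rw [norm_mul, norm_of_nonneg (hK0 z), norm_eq_abs]
    nlinarith [mul_le_mul_of_nonneg_left (hR z) (hK0 z)]
  have hKz := integrable_smul_self_of_integrable_mul_norm_sq hK hK0 hK2
  have hsplit : (fun z => K z * f (y + h • z)) =
      fun z => K z * R z + K z * f y + L (K z • z) := by
    ext z
    simp only [map_smul, smul_eq_mul, smul_apply, R, L]
    ring
  have hbias : ∫ z, K z * f (y + h • z) ∂μ - f y = ∫ z, K z * R z ∂μ := by
    rw [hsplit, integral_add (f := fun z => K z * R z + K z * f y) (hKR.add (hK.mul_const _))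
        (L.integrable_comp hKz),
      integral_add hKR (hK.mul_const _),
      integral_mul_const, hK1, L.integral_comp_comm hKz, hKmean, map_zero]
    ring
  rw [hbias]
  calc |∫ z, K z * R z ∂μ| ≤ ∫ z, M * h ^ 2 * (K z * ‖z‖ ^ 2) ∂μ := by
        rw [← norm_eq_abs]
        refine norm_integral_le_of_norm_le (hK2.const_mul _) (ae_of_all _ fun z => ?_)
        rw [norm_mul, norm_of_nonneg (hK0 z), norm_eq_abs]
        nlinarith [mul_le_mul_of_nonneg_left (hR z) (hK0 z)]
    _ = (M * ∫ z, K z * ‖z‖ ^ 2 ∂μ) * h ^ 2 := by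
        rw [integral_const_mul]
        ring

end Kernel

theorem abs_sum_div_mul_sub_le {ι : Type*} (s : Finset ι) {w I d : ι → ℝ} {a c : ℝ}
    (hw : ∀ j ∈ s, 0 ≤ w j) (hW : 0 < ∑ j ∈ s, w j) (h : ∀ j ∈ s, |I j - a| ≤ c + d j) :
    |∑ j ∈ s, w j / (∑ i ∈ s, w i) * I j - a| ≤ c + ∑ j ∈ s, w j / (∑ i ∈ s, w i) * d j := by
  set W := ∑ i ∈ s, w i
  have hβ : ∀ j ∈ s, 0 ≤ w j / W := fun j hj => div_nonneg (hw j hj) hW.le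
  have hβsum : ∑ j ∈ s, w j / W = 1 := by rw [← Finset.sum_div, div_self hW.ne']
  calc |∑ j ∈ s, w j / W * I j - a| = |∑ j ∈ s, w j / W * (I j - a)| := by
        simp only [mul_sub, Finset.sum_sub_distrib, ← Finset.sum_mul, hβsum, one_mul]
    _ ≤ ∑ j ∈ s, |w j / W * (I j - a)| := Finset.abs_sum_le_sum_abs _ _
    _ ≤ ∑ j ∈ s, w j / W * (c + d j) := Finset.sum_le_sum fun j hj => by
        rw [abs_mul, abs_of_nonneg (hβ j hj)]
        exact mul_le_mul_of_nonneg_left (h j hj) (hβ j hj)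
    _ = c + ∑ j ∈ s, w j / W * d j := by
        simp only [mul_add, Finset.sum_add_distrib, ← Finset.sum_mul, hβsum, one_mul]

theorem conditional_kde_bias_bound_general
    (M : ℝ) (fε : EuclideanSpace ℝ (Fin 2) → ℝ)
    (hfε_C2 : ContDiff ℝ 2 fε)
    (hHess : ∀ y, ‖iteratedFDeriv ℝ 2 fε y‖ ≤ M)
    (K : EuclideanSpace ℝ (Fin 2) → ℝ)
    (hKpos : ∀ z, 0 ≤ K z) (hKint : ∫ z, K z = 1)
    (hKmean : (∫ z, K z • z : EuclideanSpace ℝ (Fin 2)) = 0)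
    (hKsecond : Integrable (fun z => K z * ‖z‖ ^ 2))
    (KT : ℝ → ℝ) (hKT : ∀ u, 0 ≤ KT u)
    (m : ℕ) (t_ : Fin m → ℝ) (hT : ℝ) :
    ∃ C : ℝ, 0 ≤ C ∧
      ∀ (s : ℝ → EuclideanSpace ℝ (Fin 2)) (x : EuclideanSpace ℝ (Fin 2)) (t : ℝ)
        (hX : ℝ), 0 < hX →
        0 < (∑ j', KT (dT (t_ j') t / hT)) →
        |(∑ j, (KT (dT (t_ j) t / hT) / ∑ j', KT (dT (t_ j') t / hT)) *
            ∫ η, (hX ^ 2)⁻¹ * K (hX⁻¹ • (s (t_ j) + η - x)) * fε η) - fε (x - s t)| ≤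
          C * hX ^ 2 +
            ∑ j, (KT (dT (t_ j) t / hT) / ∑ j', KT (dT (t_ j') t / hT)) *
              |fε (x - s (t_ j)) - fε (x - s t)| := by
  have hM : 0 ≤ M := (norm_nonneg _).trans (hHess 0)
  refine ⟨M * ∫ z, K z * ‖z‖ ^ 2,
    mul_nonneg hM (integral_nonneg fun z => mul_nonneg (hKpos z) (sq_nonneg _)), ?_⟩
  intro s x t hX hhX hW
  refine abs_sum_div_mul_sub_le _ (fun j _ => hKT _) hW fun j _ => ?_
  have hshift : ∀ η, s (t_ j) + η - x = η - (x - s (t_ j)) := fun η => by abel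
  have hrescale := integral_inv_pow_mul_kernel_mul_eq volume K fε (x - s (t_ j)) hhX
  rw [finrank_euclideanSpace_fin] at hrescale
  simp_rw [hshift, hrescale]
  calc _ ≤ |(∫ z, K z * fε (x - s (t_ j) + hX • z)) - fε (x - s (t_ j))| +
          |fε (x - s (t_ j)) - fε (x - s t)| := abs_sub_le _ _ _
    _ ≤ _ := add_le_add_left
          (abs_integral_kernel_mul_sub_le hfε_C2 hHess hKpos hKint hKmean hKsecond _ _) _

/-- Bias bound for the conditional KDE given a trajectory `s`.  With iid noise of
bounded density `f_ε` (with bounded Hessian `≤ M`), a kernel `K` with `∫K = 1` and vanishing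
first moment, and time-kernel weights `β_j(t) = K_T(d_T(t_j,t)/h_T)/Σ_{j'}K_T(d_T(t_{j'},t)/h_T)`,
the expectation of the conditional KDE satisfies
`|E[Σ_j β_j(t) h_X⁻² K((s(t_j)+ε_j−x)/h_X)] − f_ε(x−s(t))|
  ≤ C·h_X² + Σ_j β_j(t)·|f_ε(x−s(t_j)) − f_ε(x−s(t))|`
for a constant `C` depending only on `K` and `M`. -/
theorem conditional_kde_bias_bound
    (M : ℝ) (fε : EuclideanSpace ℝ (Fin 2) → ℝ)
    (hfε_nonneg : ∀ y, 0 ≤ fε y) (hfε_int : ∫ y, fε y = 1)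
    (hfε_bound : ∀ y, fε y ≤ M)
    (hfε_C2 : ContDiff ℝ 2 fε)
    (hHess : ∀ y, ‖iteratedFDeriv ℝ 2 fε y‖ ≤ M)
    (K : EuclideanSpace ℝ (Fin 2) → ℝ)
    (hKpos : ∀ z, 0 ≤ K z) (hKint : ∫ z, K z = 1)
    (hKmean : (∫ z, K z • z : EuclideanSpace ℝ (Fin 2)) = 0)
    (hKsecond : Integrable (fun z => K z * ‖z‖ ^ 2))
    (KT : ℝ → ℝ) (hKT : ∀ u, 0 ≤ KT u)
    (m : ℕ) (t_ : Fin m → ℝ) (hT : ℝ) (hhT : 0 < hT) :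
    ∃ C : ℝ, 0 ≤ C ∧
      ∀ (s : ℝ → EuclideanSpace ℝ (Fin 2)) (x : EuclideanSpace ℝ (Fin 2)) (t : ℝ)
        (hX : ℝ), 0 < hX →
        0 < (∑ j', KT (dT (t_ j') t / hT)) →
        |(∑ j, (KT (dT (t_ j) t / hT) / ∑ j', KT (dT (t_ j') t / hT)) *
            ∫ η, (hX ^ 2)⁻¹ * K (hX⁻¹ • (s (t_ j) + η - x)) * fε η) - fε (x - s t)| ≤
          C * hX ^ 2 +
            ∑ j, (KT (dT (t_ j) t / hT) / ∑ j', KT (dT (t_ j') t / hT)) *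
              |fε (x - s (t_ j)) - fε (x - s t)| :=
  conditional_kde_bias_bound_general M fε hfε_C2 hHess K hKpos hKint hKmean hKsecond KT hKT m t_ hT
end
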